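/- arXiv:1504.03196 — 2 statements merged into one kernel-verified Lean document; each statement's English description precedes it below -/
import Mathlib

section
/- Let λ > 0, m ≥ 2 the smallest integer with α(m) > 0, and suppose ∑_{k≥m} (α(k)/k!)(k−1) < ∞. Define φ(y) = (1/(1−y))·∑_{k≥m} (α(k)/k!)(k−1)·y^k for y ∈ [0,1). Then for each λ > 0 there is a unique y_λ ∈ (0,1) with φ(y_λ) = λ, and y_λ = λ^{1/m}·(m!/((m−1)·α(m)))^{1/m} + o(λ^{1/m}) as λ → 0. -/
/-!
Write `φ(y) = (1 - y)⁻¹ · S(y) · y^m` with `S(y) = ∑ c_j y^j`, a power series with nonnegative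
summable coefficients and `S(0) = c₀ = α(m)(m - 1)/m! > 0`. On `[0, 1)` the three factors are
positive (for `y > 0`) and nondecreasing, `y^m` strictly, so `φ` is strictly increasing; it is
continuous, vanishes at `0` and tends to `∞` at `1⁻`, so each `λ > 0` has exactly one preimage
`y_λ ∈ (0, 1)`. Monotonicity forces `y_λ → 0` as `λ → 0⁺`, and then
`λ = φ(y_λ) = y_λ^m (c₀ + o(1))`, i.e. `y_λ = (λ / c₀)^{1/m} (1 + o(1))`.
-/

open Filter Asymptotics

/-- The stationarity condition at `x = 1`:
`φ(y) = (1/(1−y)) ∑_{k≥m} (α(k)/k!)(k−1) y^k` (index shifted: `k = j + m`). -/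
noncomputable def statPhi (α : ℕ → ℝ) (m : ℕ) (y : ℝ) : ℝ :=
  (1 - y)⁻¹ * ∑' j : ℕ,
    α (j + m) / (Nat.factorial (j + m) : ℝ) * ((j : ℝ) + m - 1) * y ^ (j + m)

open Set Topology

section PowerSeries

variable {c : ℕ → ℝ}

lemma norm_mul_pow_le (hc : 0 ≤ c) {y : ℝ} (hy : |y| ≤ 1) (j : ℕ) : ‖c j * y ^ j‖ ≤ c j := by
  rw [Real.norm_eq_abs, abs_mul, abs_of_nonneg (hc j), abs_pow]
  exact mul_le_of_le_one_right (hc j) (pow_le_one₀ (abs_nonneg y) hy)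

lemma summable_mul_pow_of_abs_le_one (hc : 0 ≤ c) (hsum : Summable c) {y : ℝ} (hy : |y| ≤ 1) :
    Summable fun j => c j * y ^ j :=
  hsum.of_norm_bounded (norm_mul_pow_le hc hy)

lemma continuousOn_tsum_mul_pow (hc : 0 ≤ c) (hsum : Summable c) :
    ContinuousOn (fun y => ∑' j, c j * y ^ j) (Icc (-1) 1) :=
  continuousOn_tsum (fun j => (continuous_const.mul (continuous_pow j)).continuousOn) hsum
    fun j _ hy => norm_mul_pow_le hc (abs_le.2 hy) j

lemma tsum_mul_pow_zero : ∑' j, c j * (0 : ℝ) ^ j = c 0 := by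
  rw [tsum_eq_single 0 fun j hj => by rw [zero_pow hj, mul_zero], pow_zero, mul_one]

lemma monotoneOn_tsum_mul_pow (hc : 0 ≤ c) (hsum : Summable c) :
    MonotoneOn (fun y => ∑' j, c j * y ^ j) (Icc 0 1) := fun a ha b hb hab =>
  (summable_mul_pow_of_abs_le_one hc hsum (abs_le.2 ⟨by linarith [ha.1], ha.2⟩)).tsum_le_tsum
    (fun j => mul_le_mul_of_nonneg_left (pow_le_pow_left₀ ha.1 hab j) (hc j))
    (summable_mul_pow_of_abs_le_one hc hsum (abs_le.2 ⟨by linarith [hb.1], hb.2⟩))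

lemma le_tsum_mul_pow (hc : 0 ≤ c) (hsum : Summable c) {y : ℝ} (hy : y ∈ Icc 0 1) :
    c 0 ≤ ∑' j, c j * y ^ j := by
  simpa only [tsum_mul_pow_zero] using
    monotoneOn_tsum_mul_pow hc hsum ⟨le_rfl, zero_le_one⟩ hy hy.1

end PowerSeries

noncomputable def seriesPhi (c : ℕ → ℝ) (m : ℕ) (y : ℝ) : ℝ :=
  (1 - y)⁻¹ * ∑' j, c j * y ^ (j + m)

namespace seriesPhi

variable {c : ℕ → ℝ} {m : ℕ}

lemma eq_mul_pow (y : ℝ) : seriesPhi c m y = (1 - y)⁻¹ * (∑' j, c j * y ^ j) * y ^ m := by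
  simp only [seriesPhi, pow_add, ← mul_assoc, tsum_mul_right]

lemma zero (hm : m ≠ 0) : seriesPhi c m 0 = 0 := by
  rw [eq_mul_pow, zero_pow hm, mul_zero]

lemma strictMonoOn (hc : 0 ≤ c) (hsum : Summable c) (hc0 : 0 < c 0) (hm : m ≠ 0) :
    StrictMonoOn (seriesPhi c m) (Ico 0 1) := by
  intro a ha b hb hab
  have hS := monotoneOn_tsum_mul_pow hc hsum ⟨ha.1, ha.2.le⟩ ⟨hb.1, hb.2.le⟩ hab.le
  have hSa := le_tsum_mul_pow hc hsum ⟨ha.1, ha.2.le⟩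
  have hinv : (1 - a)⁻¹ ≤ (1 - b)⁻¹ := inv_anti₀ (by linarith [hb.2]) (by linarith)
  rw [eq_mul_pow, eq_mul_pow]
  refine mul_lt_mul' (mul_le_mul hinv hS (by linarith) (inv_nonneg.2 (by linarith [hb.2])))
    (pow_lt_pow_left₀ hab ha.1 hm) (pow_nonneg ha.1 m) ?_
  exact mul_pos (inv_pos.2 (by linarith [hb.2])) (hc0.trans_le (hSa.trans hS))

lemma continuousOn (hc : 0 ≤ c) (hsum : Summable c) : ContinuousOn (seriesPhi c m) (Ico 0 1) := by
  rw [show seriesPhi c m = _ from funext eq_mul_pow]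
  refine ContinuousOn.mul (ContinuousOn.mul ?_ ((continuousOn_tsum_mul_pow hc hsum).mono
    fun y hy => ⟨by linarith [hy.1], hy.2.le⟩)) (continuous_pow m).continuousOn
  exact (continuous_const.sub continuous_id).continuousOn.inv₀ fun y hy =>
    sub_ne_zero.2 (ne_of_gt hy.2)

lemma tendsto_atTop (hc : 0 ≤ c) (hsum : Summable c) (hc0 : 0 < c 0) :
    Tendsto (seriesPhi c m) (𝓝[<] 1) atTop := by
  have hinv : Tendsto (fun y : ℝ => (1 - y)⁻¹) (𝓝[<] 1) atTop := by
    refine tendsto_inv_nhdsGT_zero.comp (tendsto_nhdsWithin_iff.2 ⟨?_, ?_⟩)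
    · simpa using (tendsto_const_nhds (x := (1 : ℝ))).sub
        (tendsto_id.mono_left (nhdsWithin_le_nhds (a := (1 : ℝ)) (s := Iio 1)))
    · filter_upwards [self_mem_nhdsWithin] with y (hy : y < 1) using sub_pos.2 hy
  have hS : Tendsto (fun y => (∑' j, c j * y ^ j) * y ^ m) (𝓝[<] 1)
      (𝓝 ((∑' j, c j * (1 : ℝ) ^ j) * 1 ^ m)) :=
    (((continuousOn_tsum_mul_pow hc hsum).mul (continuous_pow m).continuousOn) 1
      ⟨by norm_num, le_rfl⟩).mono_of_mem_nhdsWithin (Icc_mem_nhdsLT (by norm_num))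
  rw [show seriesPhi c m = _ from funext eq_mul_pow]
  simp_rw [mul_assoc]
  refine hinv.atTop_mul_pos ?_ hS
  rw [one_pow, mul_one]
  exact hc0.trans_le (le_tsum_mul_pow hc hsum ⟨zero_le_one, le_rfl⟩)

lemma exists_eq (hc : 0 ≤ c) (hsum : Summable c) (hc0 : 0 < c 0) (hm : m ≠ 0) {lam : ℝ}
    (hlam : 0 < lam) : ∃ y ∈ Ioo 0 1, seriesPhi c m y = lam := by
  obtain ⟨r, hlam_le, hr⟩ := (((tendsto_atTop (m := m) hc hsum hc0).eventually_ge_atTop lam).and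
    (Ioo_mem_nhdsLT zero_lt_one)).exists
  obtain ⟨y, hy, rfl⟩ := intermediate_value_Icc hr.1.le
    ((continuousOn hc hsum).mono (Icc_subset_Ico_right hr.2)) ⟨(zero hm).le.trans hlam.le, hlam_le⟩
  refine ⟨y, ⟨hy.1.lt_of_ne ?_, hy.2.trans_lt hr.2⟩, rfl⟩
  rintro rfl
  exact hlam.ne' (zero hm)

lemma tendsto_div_pow (hc : 0 ≤ c) (hsum : Summable c) :
    Tendsto (fun y => seriesPhi c m y / y ^ m) (𝓝[>] 0) (𝓝 (c 0)) := by
  have hcont : ContinuousAt (fun y : ℝ => (1 - y)⁻¹ * ∑' j, c j * y ^ j) 0 :=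
    ((continuous_const.sub continuous_id).continuousAt.inv₀ (by norm_num)).mul
      ((continuousOn_tsum_mul_pow hc hsum).continuousAt (Icc_mem_nhds (by norm_num) one_pos))
  have h0 : (1 - 0 : ℝ)⁻¹ * ∑' j, c j * (0 : ℝ) ^ j = c 0 := by
    rw [tsum_mul_pow_zero, sub_zero, inv_one, one_mul]
  refine (h0 ▸ hcont.tendsto.mono_left nhdsWithin_le_nhds).congr' ?_
  filter_upwards [self_mem_nhdsWithin] with y hy
  rw [eq_mul_pow, mul_div_cancel_right₀ _ (pow_ne_zero m (ne_of_gt hy))]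

end seriesPhi

lemma tendsto_nhdsGT_zero_of_strictMonoOn {φ Y : ℝ → ℝ} {b : ℝ} (hφ : StrictMonoOn φ (Ico 0 b))
    (hφ0 : φ 0 = 0) (hY : ∀ lam, 0 < lam → Y lam ∈ Ioo 0 b ∧ φ (Y lam) = lam) :
    Tendsto Y (𝓝[>] 0) (𝓝[>] 0) := by
  have hYpos : ∀ᶠ lam in 𝓝[>] 0, Y lam ∈ Ioi 0 := by
    filter_upwards [self_mem_nhdsWithin] with lam hlam using (hY lam hlam).1.1
  refine tendsto_nhdsWithin_iff.2 ⟨tendsto_order.2 ⟨fun a ha => ?_, fun ε hε => ?_⟩, hYpos⟩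
  · filter_upwards [hYpos] with lam hlam using ha.trans hlam
  -- `Y 1` only serves as some point of `(0, b)`.
  obtain ⟨⟨hY1, hY1b⟩, -⟩ := hY 1 one_pos
  set ε' := min ε (Y 1)
  have hε' : ε' ∈ Ico 0 b := ⟨(lt_min hε hY1).le, (min_le_right _ _).trans_lt hY1b⟩
  have hφε' : 0 < φ ε' := hφ0 ▸ hφ ⟨le_rfl, hε'.1.trans_lt hε'.2⟩ hε' (lt_min hε hY1)
  filter_upwards [Ioo_mem_nhdsGT hφε'] with lam hlam
  obtain ⟨hYlam, hφY⟩ := hY lam hlam.1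
  have : Y lam < ε' := by
    rw [← hφ.lt_iff_lt ⟨hYlam.1.le, hYlam.2⟩ hε', hφY]
    exact hlam.2
  exact this.trans_le (min_le_left _ _)

lemma isLittleO_sub_rpow_of_tendsto_div_pow {φ Y : ℝ → ℝ} {a : ℝ} {m : ℕ} (hm : m ≠ 0)
    (ha : 0 < a) (hφ : Tendsto (fun y => φ y / y ^ m) (𝓝[>] 0) (𝓝 a))
    (hY : Tendsto Y (𝓝[>] 0) (𝓝[>] 0)) (hφY : ∀ lam, 0 < lam → φ (Y lam) = lam) :
    (fun lam => Y lam - lam ^ ((1 : ℝ) / m) * a⁻¹ ^ ((1 : ℝ) / m))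
      =o[𝓝[>] 0] fun lam => lam ^ ((1 : ℝ) / m) := by
  have hratio : Tendsto (fun lam => ((φ (Y lam) / Y lam ^ m)⁻¹ ^ ((1 : ℝ) / m)
      - a⁻¹ ^ ((1 : ℝ) / m))) (𝓝[>] 0) (𝓝 0) := by
    simpa only [sub_self, Function.comp_def] using
      (((hφ.comp hY).inv₀ ha.ne').rpow_const (p := (1 : ℝ) / m) (Or.inr (by positivity))).sub_const
        (a⁻¹ ^ ((1 : ℝ) / m))
  refine ((isBigO_refl (fun lam => lam ^ ((1 : ℝ) / m)) _).mul_isLittleO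
    ((isLittleO_one_iff ℝ).2 hratio)).congr' ?_ (by simp)
  filter_upwards [self_mem_nhdsWithin, hY self_mem_nhdsWithin] with lam (hlam : 0 < lam)
    (hYlam : 0 < Y lam)
  rw [hφY lam hlam, inv_div, Real.div_rpow (by positivity) hlam.le, one_div,
    Real.pow_rpow_inv_natCast hYlam.le hm, mul_sub,
    mul_div_cancel₀ _ (Real.rpow_pos_of_pos hlam _).ne']

-- `statPhi α m` is definitionally `seriesPhi (statCoeff α m) m`.
noncomputable def statCoeff (α : ℕ → ℝ) (m j : ℕ) : ℝ :=
  α (j + m) / (Nat.factorial (j + m) : ℝ) * ((j : ℝ) + m - 1)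

lemma statCoeff_nonneg {α : ℕ → ℝ} (hα : 0 ≤ α) {m : ℕ} (hm : m ≠ 0) : 0 ≤ statCoeff α m :=
  fun j => mul_nonneg (div_nonneg (hα _) (Nat.cast_nonneg _)) <| by
    have : (1 : ℝ) ≤ m := by exact_mod_cast Nat.one_le_iff_ne_zero.2 hm
    linarith [(Nat.cast_nonneg j : (0 : ℝ) ≤ j)]

lemma statCoeff_zero (α : ℕ → ℝ) (m : ℕ) :
    statCoeff α m 0 = α m / (Nat.factorial m : ℝ) * ((m : ℝ) - 1) := by
  simp [statCoeff]

theorem stationary_total_density_asymptotics_general (α : ℕ → ℝ) (hα0 : ∀ k, 0 ≤ α k)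
    (m : ℕ) (hm : 2 ≤ m) (hαm : 0 < α m)
    (hsum : Summable (fun j : ℕ =>
      α (j + m) / (Nat.factorial (j + m) : ℝ) * ((j : ℝ) + m - 1))) :
    ∃ Y : ℝ → ℝ,
      (∀ lam : ℝ, 0 < lam →
        Y lam ∈ Set.Ioo (0 : ℝ) 1 ∧ statPhi α m (Y lam) = lam ∧
          ∀ y ∈ Set.Ioo (0 : ℝ) 1, statPhi α m y = lam → y = Y lam) ∧
      (fun lam : ℝ => Y lam -
          lam ^ ((1 : ℝ) / m) *
            ((Nat.factorial m : ℝ) / (((m : ℝ) - 1) * α m)) ^ ((1 : ℝ) / m))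
        =o[nhdsWithin 0 (Set.Ioi 0)] fun lam : ℝ => lam ^ ((1 : ℝ) / m) := by
  have hm0 : m ≠ 0 := by omega
  have hm1 : (1 : ℝ) < m := by exact_mod_cast hm
  have hc : 0 ≤ statCoeff α m := statCoeff_nonneg hα0 hm0
  have hc0 : 0 < statCoeff α m 0 := by
    rw [statCoeff_zero]
    exact mul_pos (div_pos hαm (by positivity)) (by linarith)
  have hmono : StrictMonoOn (statPhi α m) (Ico 0 1) := seriesPhi.strictMonoOn hc hsum hc0 hm0
  have hroot (lam : ℝ) (hlam : 0 < lam) : ∃ y ∈ Ioo 0 1, statPhi α m y = lam :=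
    seriesPhi.exists_eq hc hsum hc0 hm0 hlam
  set Y := Function.invFunOn (statPhi α m) (Ioo 0 1)
  have hY (lam : ℝ) (hlam : 0 < lam) : Y lam ∈ Ioo 0 1 ∧ statPhi α m (Y lam) = lam :=
    ⟨Function.invFunOn_mem (hroot lam hlam), Function.invFunOn_eq (hroot lam hlam)⟩
  refine ⟨Y, fun lam hlam => ⟨(hY lam hlam).1, (hY lam hlam).2, fun y hy hφy => ?_⟩, ?_⟩
  · exact hmono.injOn (Ioo_subset_Ico_self hy) (Ioo_subset_Ico_self (hY lam hlam).1)
      (hφy.trans (hY lam hlam).2.symm)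
  have hconst : (statCoeff α m 0)⁻¹ = (Nat.factorial m : ℝ) / (((m : ℝ) - 1) * α m) := by
    rw [statCoeff_zero, div_mul_eq_mul_div, inv_div, mul_comm]
  rw [← hconst]
  exact isLittleO_sub_rpow_of_tendsto_div_pow hm0 hc0 (seriesPhi.tendsto_div_pow hc hsum)
    (tendsto_nhdsGT_zero_of_strictMonoOn hmono (seriesPhi.zero hm0) hY) fun lam hlam =>
      (hY lam hlam).2

/-- For each `λ > 0` there is a unique `y_λ ∈ (0,1)` with `φ(y_λ) = λ`, and
`y_λ = λ^{1/m}(m!/((m−1)α(m)))^{1/m} + o(λ^{1/m})` as `λ → 0⁺`. -/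
theorem stationary_total_density_asymptotics (α : ℕ → ℝ) (hα0 : ∀ k, 0 ≤ α k)
    (m : ℕ) (hm : 2 ≤ m) (hαm : 0 < α m) (hmin : ∀ k < m, α k = 0)
    (hsum : Summable (fun j : ℕ =>
      α (j + m) / (Nat.factorial (j + m) : ℝ) * ((j : ℝ) + m - 1))) :
    ∃ Y : ℝ → ℝ,
      (∀ lam : ℝ, 0 < lam →
        Y lam ∈ Set.Ioo (0 : ℝ) 1 ∧ statPhi α m (Y lam) = lam ∧
          ∀ y ∈ Set.Ioo (0 : ℝ) 1, statPhi α m y = lam → y = Y lam) ∧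
      (fun lam : ℝ => Y lam -
          lam ^ ((1 : ℝ) / m) *
            ((Nat.factorial m : ℝ) / (((m : ℝ) - 1) * α m)) ^ ((1 : ℝ) / m))
        =o[nhdsWithin 0 (Set.Ioi 0)] fun lam : ℝ => lam ^ ((1 : ℝ) / m) :=
  stationary_total_density_asymptotics_general α hα0 m hm hαm hsum
end

section
/- For m ≥ 2 and n ≥ 1, set k = n(m−1) + 1. Then the coefficient p_k = (1/k)·((m−1)/m)^k·(1/m)^n·C(mn, n) satisfies p_k ≤ 1 for all n, and p_k > 0; moreover the generating function g(x) = ∑_n p_{n(m−1)+1} x^{n(m−1)+1} has radius of convergence exactly 1. -/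
/-!
Up to the factor `(1 - 1/m) / k`, the coefficient `p_k` is the weight at `n` of the binomial
distribution with `mn` trials and success probability `1/m`, i.e. the Bernstein polynomial
`b_{mn,n}` evaluated at `1/m`. Since `n` is the mean of that distribution, the weights increase
up to `n` and decrease afterwards, so the weight at `n` is the largest of `mn + 1` weights summing
to `1`: it lies in `[1/(mn+1), 1]`. Hence `0 < p_k ≤ 1`, and `p_k` decays at most polynomially in
`n`, so the terms `p_k x^k` do not even tend to `0` when `|x| > 1`.
-/

open Filter Topology Polynomial

namespace bernsteinPolynomial

theorem eval_nonneg {x : ℝ} (hx₀ : 0 ≤ x) (hx₁ : x ≤ 1) (N k : ℕ) :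
    0 ≤ (bernsteinPolynomial ℝ N k).eval x := by
  have : 0 ≤ 1 - x := by linarith
  simp only [bernsteinPolynomial, eval_mul, eval_pow, eval_sub, eval_one, eval_X, eval_natCast]
  positivity

theorem eval_le_one {x : ℝ} (hx₀ : 0 ≤ x) (hx₁ : x ≤ 1) {N k : ℕ} (hk : k ≤ N) :
    (bernsteinPolynomial ℝ N k).eval x ≤ 1 := by
  have hsum := congrArg (eval x) (bernsteinPolynomial.sum ℝ N)
  rw [eval_finsetSum, eval_one] at hsum
  exact hsum ▸ Finset.single_le_sum (fun i _ => eval_nonneg hx₀ hx₁ N i)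
    (Finset.mem_range_succ_iff.2 hk)

theorem succ_mul_one_sub_mul_eval_succ (x : ℝ) {N k : ℕ} (hk : k < N) :
    (k + 1) * (1 - x) * (bernsteinPolynomial ℝ N (k + 1)).eval x =
      (N - k) * x * (bernsteinPolynomial ℝ N k).eval x := by
  have hchoose : (N.choose (k + 1) : ℝ) * (k + 1) = N.choose k * (N - k) := by
    rw [← Nat.cast_sub hk.le]
    exact_mod_cast Nat.choose_succ_right_eq N k
  obtain ⟨j, rfl⟩ : ∃ j, N = k + 1 + j := ⟨N - (k + 1), by omega⟩
  simp only [bernsteinPolynomial, eval_mul, eval_pow, eval_sub, eval_one, eval_X, eval_natCast,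
    show k + 1 + j - (k + 1) = j by omega, show k + 1 + j - k = j + 1 by omega]
  linear_combination x ^ (k + 1) * (1 - x) ^ (j + 1) * hchoose

section Mode

variable {x : ℝ} {N n : ℕ}

theorem eval_le_eval_succ_of_lt_mean (hx₀ : 0 < x) (hx₁ : x < 1) (hmean : (N : ℝ) * x = n)
    {k : ℕ} (hk : k < n) :
    (bernsteinPolynomial ℝ N k).eval x ≤ (bernsteinPolynomial ℝ N (k + 1)).eval x := by
  have hnN : n ≤ N := by exact_mod_cast (show (n : ℝ) ≤ N by nlinarith)
  have hkN : k < N := by omega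
  have hk' : (k : ℝ) + 1 ≤ n := by exact_mod_cast hk
  have hpos : 0 < ((k : ℝ) + 1) * (1 - x) := by nlinarith
  have he := eval_nonneg hx₀.le hx₁.le N k
  refine le_of_mul_le_mul_left ?_ hpos
  rw [succ_mul_one_sub_mul_eval_succ x hkN]
  nlinarith

theorem eval_succ_le_eval_of_mean_le (hx₀ : 0 < x) (hx₁ : x < 1) (hmean : (N : ℝ) * x = n)
    {k : ℕ} (hk : n ≤ k) :
    (bernsteinPolynomial ℝ N (k + 1)).eval x ≤ (bernsteinPolynomial ℝ N k).eval x := by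
  rcases lt_or_ge k N with hkN | hNk
  · have hk' : (n : ℝ) ≤ k := by exact_mod_cast hk
    have hpos : 0 < ((k : ℝ) + 1) * (1 - x) := by nlinarith
    have he := eval_nonneg hx₀.le hx₁.le N k
    refine le_of_mul_le_mul_left ?_ hpos
    rw [succ_mul_one_sub_mul_eval_succ x hkN]
    nlinarith
  · rw [eq_zero_of_lt ℝ (Nat.lt_succ_of_le hNk), eval_zero]
    exact eval_nonneg hx₀.le hx₁.le N k

theorem eval_le_eval_mean (hx₀ : 0 < x) (hx₁ : x < 1) (hmean : (N : ℝ) * x = n)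
    (k : ℕ) :
    (bernsteinPolynomial ℝ N k).eval x ≤ (bernsteinPolynomial ℝ N n).eval x := by
  rcases le_total k n with hkn | hnk
  · induction hkn using Nat.decreasingInduction with
    | self => rfl
    | of_succ j hj ih => exact (eval_le_eval_succ_of_lt_mean hx₀ hx₁ hmean hj).trans ih
  · induction k, hnk using Nat.le_induction with
    | base => rfl
    | succ j hj ih => exact (eval_succ_le_eval_of_mean_le hx₀ hx₁ hmean hj).trans ih

theorem inv_succ_le_eval_mean (hx₀ : 0 < x) (hx₁ : x < 1) (hmean : (N : ℝ) * x = n) :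
    ((N : ℝ) + 1)⁻¹ ≤ (bernsteinPolynomial ℝ N n).eval x := by
  have hsum := congrArg (eval x) (bernsteinPolynomial.sum ℝ N)
  rw [eval_finsetSum, eval_one] at hsum
  have := Finset.sum_le_card_nsmul (Finset.range (N + 1)) _ _
    fun k _ => eval_le_eval_mean hx₀ hx₁ hmean k
  rw [hsum, Finset.card_range, nsmul_eq_mul] at this
  push_cast at this
  rw [inv_le_iff_one_le_mul₀ (by positivity)]
  linarith

end Mode

end bernsteinPolynomial

theorem tendsto_sq_div_pow_of_one_lt (a b : ℝ) {r : ℝ} (hr : 1 < r) :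
    Tendsto (fun n : ℕ => (a * n + b) ^ 2 / r ^ n) atTop (𝓝 0) := by
  have h := fun k => tendsto_pow_const_div_const_pow_of_one_lt k hr
  have hsum := (((h 2).const_mul (a ^ 2)).add ((h 1).const_mul (2 * a * b))).add
    ((h 0).const_mul (b ^ 2))
  simp only [mul_zero, add_zero] at hsum
  refine hsum.congr fun n => ?_
  ring

theorem summable_mul_pow_of_abs_le_one_s17 {a : ℕ → ℝ} (ha : ∀ n, |a n| ≤ 1) {j : ℕ}
    (hj : 0 < j) {x : ℝ} (hx : |x| < 1) : Summable fun n => a n * x ^ (n * j + 1) := by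
  have hratio : |x| ^ j < 1 := pow_lt_one₀ (abs_nonneg x) hx hj.ne'
  have hgeom : Summable fun n : ℕ => |x| * (|x| ^ j) ^ n :=
    (summable_geometric_of_lt_one (by positivity) hratio).mul_left _
  refine hgeom.of_norm_bounded fun n => ?_
  rw [Real.norm_eq_abs, abs_mul, abs_pow, ← pow_mul, mul_comm j, pow_succ', mul_comm |x|]
  exact mul_le_of_le_one_left (by positivity) (ha n)

theorem not_summable_mul_pow_of_div_sq_le {a : ℕ → ℝ} {c b : ℝ} (hc : 0 < c) (hb : 0 ≤ b)
    (ha : ∀ n : ℕ, c / (b * n + 1) ^ 2 ≤ a n) {j : ℕ} (hj : 0 < j) {x : ℝ}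
    (hx : 1 < |x|) :
    ¬ Summable fun n => a n * x ^ (n * j + 1) := by
  intro hS
  have hlim := (hS.tendsto_atTop_zero.abs.mul (tendsto_sq_div_pow_of_one_lt b 1 hx))
  rw [abs_zero, zero_mul] at hlim
  refine hc.not_ge (ge_of_tendsto' hlim fun n => ?_)
  have hden : 0 < (b * n + 1) ^ 2 := by positivity
  have hxn : 0 < |x| ^ n := by positivity
  have hpow : |x| ^ n ≤ |x| ^ (n * j + 1) := pow_le_pow_right₀ hx.le (by nlinarith)
  have han : c / (b * n + 1) ^ 2 * |x| ^ (n * j + 1) ≤ |a n * x ^ (n * j + 1)| := by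
    rw [abs_mul, abs_pow]
    exact mul_le_mul_of_nonneg_right ((ha n).trans (le_abs_self _)) (by positivity)
  calc c ≤ c * (|x| ^ (n * j + 1) / |x| ^ n) :=
        le_mul_of_one_le_right hc.le ((one_le_div hxn).2 hpow)
    _ = c / (b * n + 1) ^ 2 * |x| ^ (n * j + 1) * ((b * n + 1) ^ 2 / |x| ^ n) := by
        field_simp
    _ ≤ |a n * x ^ (n * j + 1)| * ((b * n + 1) ^ 2 / |x| ^ n) :=
        mul_le_mul_of_nonneg_right han (by positivity)

noncomputable def pcoef (m n : ℕ) : ℝ :=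
  (1 / ((n * (m - 1) + 1 : ℕ) : ℝ)) * (((m : ℝ) - 1) / m) ^ (n * (m - 1) + 1) *
    ((1 : ℝ) / m) ^ n * (Nat.choose (m * n) n : ℝ)

theorem pcoef_eq_mul_bernsteinPolynomial_eval {m : ℕ} (hm : m ≠ 0) (n : ℕ) :
    pcoef m n = (1 - (m : ℝ)⁻¹) / ((n * (m - 1) + 1 : ℕ) : ℝ) *
      (bernsteinPolynomial ℝ (m * n) n).eval (m : ℝ)⁻¹ := by
  have hm0 : (m : ℝ) ≠ 0 := by exact_mod_cast hm
  have hexp : m * n - n = n * (m - 1) := by rw [mul_comm n, Nat.sub_one_mul]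
  simp only [pcoef, bernsteinPolynomial, eval_mul, eval_pow, eval_sub, eval_one, eval_X,
    eval_natCast, hexp, pow_succ]
  field_simp

theorem bernsteinPolynomial_eval_inv_bounds {m : ℕ} (hm : 2 ≤ m) (n : ℕ) :
    ((m * n : ℝ) + 1)⁻¹ ≤ (bernsteinPolynomial ℝ (m * n) n).eval (m : ℝ)⁻¹ ∧
      (bernsteinPolynomial ℝ (m * n) n).eval (m : ℝ)⁻¹ ≤ 1 := by
  have hx₀ : (0 : ℝ) < (m : ℝ)⁻¹ := by positivity
  have hx₁ : (m : ℝ)⁻¹ < 1 := inv_lt_one_of_one_lt₀ (by exact_mod_cast hm)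
  have hmean : ((m * n : ℕ) : ℝ) * (m : ℝ)⁻¹ = n := by
    push_cast
    field_simp
  exact ⟨by exact_mod_cast bernsteinPolynomial.inv_succ_le_eval_mean hx₀ hx₁ hmean,
    bernsteinPolynomial.eval_le_one hx₀.le hx₁.le (Nat.le_mul_of_pos_left n (by omega))⟩

theorem one_sub_inv_natCast_pos {m : ℕ} (hm : 2 ≤ m) : 0 < 1 - (m : ℝ)⁻¹ :=
  sub_pos.2 (inv_lt_one_of_one_lt₀ (by exact_mod_cast hm))

theorem div_sq_le_pcoef {m : ℕ} (hm : 2 ≤ m) (n : ℕ) :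
    (1 - (m : ℝ)⁻¹) / ((m : ℝ) * n + 1) ^ 2 ≤ pcoef m n := by
  have hq := (one_sub_inv_natCast_pos hm).le
  have hk : ((n * (m - 1) + 1 : ℕ) : ℝ) ≤ m * n + 1 := by
    exact_mod_cast (by rw [mul_comm m]; gcongr; omega : n * (m - 1) + 1 ≤ m * n + 1)
  rw [pcoef_eq_mul_bernsteinPolynomial_eval (by omega), sq, ← div_div,
    div_eq_mul_inv _ ((m : ℝ) * n + 1)]
  gcongr
  exact (bernsteinPolynomial_eval_inv_bounds hm n).1

theorem pcoef_pos {m : ℕ} (hm : 2 ≤ m) (n : ℕ) : 0 < pcoef m n :=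
  (div_pos (one_sub_inv_natCast_pos hm) (by positivity)).trans_le (div_sq_le_pcoef hm n)

theorem pcoef_le_one {m : ℕ} (hm : 2 ≤ m) (n : ℕ) : pcoef m n ≤ 1 := by
  have hq : (1 - (m : ℝ)⁻¹) / ((n * (m - 1) + 1 : ℕ) : ℝ) ≤ 1 := by
    rw [div_le_one (by positivity)]
    push_cast
    have : (0 : ℝ) ≤ (m : ℝ)⁻¹ := by positivity
    nlinarith [(n.cast_nonneg : (0 : ℝ) ≤ n)]
  have hx : (m : ℝ)⁻¹ ≤ 1 := inv_le_one_of_one_le₀ (by exact_mod_cast (by omega : 1 ≤ m))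
  rw [pcoef_eq_mul_bernsteinPolynomial_eval (by omega)]
  exact mul_le_one₀ hq (bernsteinPolynomial.eval_nonneg (by positivity) hx _ _)
    (bernsteinPolynomial_eval_inv_bounds hm n).2

/-- For `k = n(m−1)+1`, the coefficients
`p_k = (1/k)((m−1)/m)^k (1/m)^n C(mn, n)` satisfy `0 < p_k ≤ 1`, and the generating
function `∑_n p_{n(m−1)+1} x^{n(m−1)+1}` has radius of convergence exactly `1`:
it converges for `|x| < 1` and diverges for `|x| > 1`. -/
theorem pcoef_bounds_and_radius (m : ℕ) (hm : 2 ≤ m)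
    (p : ℕ → ℝ)
    (hp : ∀ n : ℕ, p n =
      (1 / ((n * (m - 1) + 1 : ℕ) : ℝ)) * (((m : ℝ) - 1) / m) ^ (n * (m - 1) + 1) *
        ((1 : ℝ) / m) ^ n * (Nat.choose (m * n) n : ℝ)) :
    (∀ n : ℕ, 1 ≤ n → 0 < p n ∧ p n ≤ 1) ∧
    (∀ x : ℝ, |x| < 1 → Summable (fun n : ℕ => p n * x ^ (n * (m - 1) + 1))) ∧
    (∀ x : ℝ, 1 < |x| → ¬ Summable (fun n : ℕ => p n * x ^ (n * (m - 1) + 1))) := by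
  obtain rfl : p = pcoef m := funext hp
  have hj : 0 < m - 1 := by omega
  refine ⟨fun n _ => ⟨pcoef_pos hm n, pcoef_le_one hm n⟩, fun x hx => ?_, fun x hx => ?_⟩
  · refine summable_mul_pow_of_abs_le_one_s17 (fun n => ?_) hj hx
    rw [abs_of_pos (pcoef_pos hm n)]
    exact pcoef_le_one hm n
  · exact not_summable_mul_pow_of_div_sq_le (one_sub_inv_natCast_pos hm) (Nat.cast_nonneg m)
      (div_sq_le_pcoef hm) hj hx
end
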